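/- arXiv:1805.03434 — 2 statements merged into one kernel-verified Lean document; each statement's English description precedes it below -/
import Mathlib

section
/- The truant of each of the following ternary sums of generalized pentagonal numbers is as given: the truant of P5(x) + P5(y) + 7·P5(z) is 25; the truant of P5(x) + P5(y) + 11·P5(z) is 43; the truant of P5(x) + 2·P5(y) + 5·P5(z) is 18; the truant of P5(x) + 2·P5(y) + 7·P5(z) is 27; and the truant of P5(x) + 3·P5(y) + 5·P5(z) is 19. That is, in each case the sum represents every positive integer smaller than the stated value, but does not represent the stated value. -/
/-!
Since `x² ≤ P₅(x)`, every term of a representation of `N` by `a·P₅ + b·P₅ + c·P₅` with positive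
coefficients satisfies `a·x² ≤ N`, so representability of `N` is a search over a finite box, and
each of the five truant statements is settled by evaluating that search in the kernel.
-/

/-- The generalized pentagonal number `P₅(x) = (3x² - x)/2`. -/
def P5 (x : ℤ) : ℤ := (3 * x ^ 2 - x) / 2

/-- The ternary sum `a·P₅(x) + b·P₅(y) + c·P₅(z)` represents `N`. -/
def Represents3 (a b c N : ℤ) : Prop :=
  ∃ x y z : ℤ, a * P5 x + b * P5 y + c * P5 z = N

/-- The ternary sum `a·P₅(x) + b·P₅(y) + c·P₅(z)` has truant `t`: it represents
every positive integer smaller than `t` but does not represent `t`. -/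
def Truant3 (a b c t : ℤ) : Prop :=
  (∀ m : ℤ, 0 < m → m < t → Represents3 a b c m) ∧ ¬ Represents3 a b c t

theorem Int.abs_le_sqrt_of_sq_le {x M : ℤ} (h : x ^ 2 ≤ M) : |x| ≤ Int.sqrt M := by
  have hnat : x.natAbs * x.natAbs ≤ M.toNat := by
    zify
    rw [Int.toNat_of_nonneg ((sq_nonneg x).trans h)]
    simpa [← sq] using h
  rw [Int.abs_eq_natAbs, Int.sqrt]
  exact_mod_cast Nat.le_sqrt.mpr hnat

theorem two_mul_P5 (x : ℤ) : 2 * P5 x = 3 * x ^ 2 - x := by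
  obtain ⟨k, hk⟩ := Int.even_mul_pred_self x
  exact Int.mul_ediv_cancel' ⟨x ^ 2 + k, by linear_combination hk⟩

theorem sq_le_P5 (x : ℤ) : x ^ 2 ≤ P5 x := by
  linarith [two_mul_P5 x, Int.le_self_sq x]

theorem P5_nonneg (x : ℤ) : 0 ≤ P5 x :=
  (sq_nonneg x).trans (sq_le_P5 x)

theorem abs_le_sqrt_of_mul_P5_le {a M x : ℤ} (ha : 0 < a) (h : a * P5 x ≤ M) :
    |x| ≤ Int.sqrt (M / a) :=
  Int.abs_le_sqrt_of_sq_le <| (sq_le_P5 x).trans <| (Int.le_ediv_iff_mul_le ha).2 (by linarith)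

/-- An `abbrev`, so that `decide` finds the instance for the bounded quantifiers. -/
abbrev Represents3InBox (a b c N : ℤ) : Prop :=
  ∃ x ∈ Finset.Icc (-Int.sqrt (N / a)) (Int.sqrt (N / a)),
  ∃ y ∈ Finset.Icc (-Int.sqrt (N / b)) (Int.sqrt (N / b)),
  ∃ z ∈ Finset.Icc (-Int.sqrt (N / c)) (Int.sqrt (N / c)),
    a * P5 x + b * P5 y + c * P5 z = N

section PositiveCoefficients

variable {a b c : ℤ} (ha : 0 < a) (hb : 0 < b) (hc : 0 < c)
include ha hb hc

theorem represents3_iff_represents3InBox (N : ℤ) :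
    Represents3 a b c N ↔ Represents3InBox a b c N := by
  constructor
  · rintro ⟨x, y, z, h⟩
    have hx := P5_nonneg x
    have hy := P5_nonneg y
    have hz := P5_nonneg z
    refine ⟨x, ?_, y, ?_, z, ?_, h⟩ <;> rw [Finset.mem_Icc, ← abs_le] <;>
      apply abs_le_sqrt_of_mul_P5_le <;> nlinarith
  · rintro ⟨x, -, y, -, z, -, h⟩
    exact ⟨x, y, z, h⟩

theorem truant3_iff_represents3InBox (t : ℤ) :
    Truant3 a b c t ↔
      (∀ m ∈ Finset.Ioo 0 t, Represents3InBox a b c m) ∧ ¬ Represents3InBox a b c t := by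
  simp only [Truant3, represents3_iff_represents3InBox ha hb hc, Finset.mem_Ioo, and_imp]

end PositiveCoefficients

/-- The truants of the five non-universal ternary candidates:
`Φ_{1,1,7}` has truant 25, `Φ_{1,1,11}` has truant 43, `Φ_{1,2,5}` has truant 18,
`Φ_{1,2,7}` has truant 27 and `Φ_{1,3,5}` has truant 19. -/
theorem ternary_truants :
    Truant3 1 1 7 25 ∧ Truant3 1 1 11 43 ∧ Truant3 1 2 5 18 ∧
    Truant3 1 2 7 27 ∧ Truant3 1 3 5 19 := by
  refine ⟨?_, ?_, ?_, ?_, ?_⟩ <;>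
    rw [truant3_iff_represents3InBox (by norm_num) (by norm_num) (by norm_num)] <;>
    decide +kernel
end

section
/- Every positive integer congruent to 1 modulo 4 that is represented over ℤ by the ternary quadratic form g(x,y,z) = x² + 2y² + 2yz + 4z² is also represented over ℤ by the ternary quadratic form f(x,y,z) = x² + y² + 7z². -/
/-!
Both `(y + 4z, y)` and `(y - 3z, y + z)` turn `u² + 7v²` into `4 (2y² + 2yz + 4z²)`, so the binary
part of `g` is represented by `u² + 7v²` as soon as one of these pairs has even entries, i.e. unless
`y` is odd and `z` even. In that last case `g(x, y, z) ≡ x² + 2 (mod 4)`, which is never `1`.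
-/

theorem Int.sq_emod_four_eq_zero_or_one (x : ℤ) : x ^ 2 % 4 = 0 ∨ x ^ 2 % 4 = 1 := by
  rcases Int.even_or_odd x with hx | hx
  · exact Or.inl (Int.emod_eq_zero_of_dvd (by simpa [sq] using mul_dvd_mul hx.two_dvd hx.two_dvd))
  · exact Or.inr (Int.sq_mod_four_eq_one_of_odd hx)

lemma ternary_emod_four_ne_one_of_odd_of_even (x : ℤ) {y z : ℤ} (hy : Odd y) (hz : Even z) :
    (x ^ 2 + 2 * y ^ 2 + 2 * y * z + 4 * z ^ 2) % 4 ≠ 1 := by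
  obtain ⟨k, rfl⟩ := hy
  obtain ⟨b, rfl⟩ := hz
  have hx := Int.sq_emod_four_eq_zero_or_one x
  have : x ^ 2 + 2 * (2 * k + 1) ^ 2 + 2 * (2 * k + 1) * (b + b) + 4 * (b + b) ^ 2
      = x ^ 2 + 2 + 4 * (2 * k ^ 2 + 2 * k + 2 * k * b + b + 4 * b ^ 2) := by ring
  omega

lemma exists_sq_add_seven_mul_sq_eq {y z : ℤ} (h : Even y ∨ Odd z) :
    ∃ u v : ℤ, u ^ 2 + 7 * v ^ 2 = 2 * y ^ 2 + 2 * y * z + 4 * z ^ 2 := by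
  rcases Int.even_or_odd y with ⟨k, rfl⟩ | ⟨k, rfl⟩
  · exact ⟨k + 2 * z, k, by ring⟩
  · obtain ⟨b, rfl⟩ := h.resolve_left (Int.not_even_iff_odd.mpr ⟨k, rfl⟩)
    exact ⟨k - 3 * b - 1, k + b + 1, by ring⟩

theorem subform_1_1_7_general (n : ℤ) (hmod : n % 4 = 1)
    (h : ∃ x y z : ℤ, x ^ 2 + 2 * y ^ 2 + 2 * y * z + 4 * z ^ 2 = n) :
    ∃ x y z : ℤ, x ^ 2 + y ^ 2 + 7 * z ^ 2 = n := by
  obtain ⟨x, y, z, rfl⟩ := h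
  have hyz : Even y ∨ Odd z := by
    by_contra! hyz
    exact ternary_emod_four_ne_one_of_odd_of_even x (Int.not_even_iff_odd.mp hyz.1)
      (Int.not_odd_iff_even.mp hyz.2) hmod
  obtain ⟨u, v, huv⟩ := exists_sq_add_seven_mul_sq_eq hyz
  exact ⟨x, u, v, by rw [add_assoc, huv]; ring⟩

/-- Every positive integer congruent to `1` modulo `4` that is represented by
`x² + 2y² + 2yz + 4z²` is also represented by `x² + y² + 7z²`. -/
theorem subform_1_1_7 (n : ℤ) (hn : 0 < n) (hmod : n % 4 = 1)
    (h : ∃ x y z : ℤ, x ^ 2 + 2 * y ^ 2 + 2 * y * z + 4 * z ^ 2 = n) :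
    ∃ x y z : ℤ, x ^ 2 + y ^ 2 + 7 * z ^ 2 = n :=
  subform_1_1_7_general n hmod h
end
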